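/- arXiv:1601.07541 — 7 statements merged into one kernel-verified Lean document; each statement's English description precedes it below -/
import Mathlib

section
/- Let G be an abelian group and H ⊆ G a subgroup. If there exists an AP-destroying permutation of H and an AP-destroying permutation of the quotient group G/H, then there exists an AP-destroying permutation of G. -/
/-- If a subgroup `H` of an abelian group `G` and the quotient `G ⧸ H` each admit an
AP-destroying permutation, then so does `G`. -/
theorem ap_destroying_of_subgroup_and_quotient
    (G : Type*) [AddCommGroup G] (H : AddSubgroup G)
    (hH : ∃ π : Equiv.Perm H,
        ∀ a b c : H, b - a = c - b → b - a ≠ 0 → π b - π a ≠ π c - π b)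
    (hQ : ∃ π : Equiv.Perm (G ⧸ H),
        ∀ a b c : G ⧸ H, b - a = c - b → b - a ≠ 0 → π b - π a ≠ π c - π b) :
    ∃ π : Equiv.Perm G,
        ∀ a b c : G, b - a = c - b → b - a ≠ 0 → π b - π a ≠ π c - π b := by
  classical
  obtain ⟨πH, hπH⟩ := hH
  obtain ⟨πQ, hπQ⟩ := hQ
  set s : G ⧸ H → G := Quotient.out with hs_def
  have hs : ∀ q : G ⧸ H, (QuotientAddGroup.mk (s q) : G ⧸ H) = q := fun q => Quotient.out_eq q
  have hmem : ∀ g : G, g - s (QuotientAddGroup.mk g) ∈ H := by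
    intro g
    have h := hs (QuotientAddGroup.mk g)
    rw [QuotientAddGroup.eq] at h
    rwa [neg_add_eq_sub] at h
  let π : Equiv.Perm G :=
    { toFun := fun g => s (πQ (QuotientAddGroup.mk g)) +
        (πH ⟨g - s (QuotientAddGroup.mk g), hmem g⟩ : H)
      invFun := fun g => s (πQ.symm (QuotientAddGroup.mk g)) +
        (πH.symm ⟨g - s (QuotientAddGroup.mk g), hmem g⟩ : H)
      left_inv := by
        intro g
        have hq : (QuotientAddGroup.mk (s (πQ (QuotientAddGroup.mk g)) +
            (πH ⟨g - s (QuotientAddGroup.mk g), hmem g⟩ : H)) : G ⧸ H)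
            = πQ (QuotientAddGroup.mk g) := by
          rw [QuotientAddGroup.mk_add, hs,
            (QuotientAddGroup.eq_zero_iff _).2 (πH _).2, add_zero]
        simp only [hq, Equiv.symm_apply_apply]
        have key : πH.symm ⟨s (πQ (QuotientAddGroup.mk g)) +
            ((πH ⟨g - s (QuotientAddGroup.mk g), hmem g⟩ : H) : G) - s (πQ (QuotientAddGroup.mk g)),
            by rw [add_sub_cancel_left]; exact (πH _).2⟩
            = ⟨g - s (QuotientAddGroup.mk g), hmem g⟩ := by
          rw [Equiv.symm_apply_eq]
          exact Subtype.ext (add_sub_cancel_left _ _)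
        rw [key]
        simp
      right_inv := by
        intro g
        have hq : (QuotientAddGroup.mk (s (πQ.symm (QuotientAddGroup.mk g)) +
            (πH.symm ⟨g - s (QuotientAddGroup.mk g), hmem g⟩ : H)) : G ⧸ H)
            = πQ.symm (QuotientAddGroup.mk g) := by
          rw [QuotientAddGroup.mk_add, hs,
            (QuotientAddGroup.eq_zero_iff _).2 (πH.symm _).2, add_zero]
        simp only [hq, Equiv.apply_symm_apply]
        have key : πH ⟨s (πQ.symm (QuotientAddGroup.mk g)) +
            ((πH.symm ⟨g - s (QuotientAddGroup.mk g), hmem g⟩ : H) : G) - s (πQ.symm (QuotientAddGroup.mk g)),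
            by rw [add_sub_cancel_left]; exact (πH.symm _).2⟩
            = ⟨g - s (QuotientAddGroup.mk g), hmem g⟩ := by
          rw [Equiv.apply_eq_iff_eq_symm_apply]
          exact Subtype.ext (add_sub_cancel_left _ _)
        rw [key]
        simp }
  refine ⟨π, ?_⟩
  intro a b c h1 h2 hcon
  have hπdef : ∀ g : G, π g = s (πQ (QuotientAddGroup.mk g)) +
      (πH ⟨g - s (QuotientAddGroup.mk g), hmem g⟩ : H) := fun g => rfl
  have hmk : ∀ g : G, (QuotientAddGroup.mk (π g) : G ⧸ H) = πQ (QuotientAddGroup.mk g) := by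
    intro g
    rw [hπdef g, QuotientAddGroup.mk_add, hs,
      (QuotientAddGroup.eq_zero_iff _).2 (πH _).2, add_zero]
  have h1Q : (QuotientAddGroup.mk b : G ⧸ H) - QuotientAddGroup.mk a
      = QuotientAddGroup.mk c - QuotientAddGroup.mk b := by
    simp only [← QuotientAddGroup.mk_sub, h1]
  have hconQ : πQ (QuotientAddGroup.mk b) - πQ (QuotientAddGroup.mk a)
      = πQ (QuotientAddGroup.mk c) - πQ (QuotientAddGroup.mk b) := by
    have := congrArg (QuotientAddGroup.mk : G → G ⧸ H) hcon
    simpa only [QuotientAddGroup.mk_sub, hmk] using this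
  by_cases hq0 : (QuotientAddGroup.mk b : G ⧸ H) - QuotientAddGroup.mk a = 0
  · -- all in the same coset
    have hab : (QuotientAddGroup.mk a : G ⧸ H) = QuotientAddGroup.mk b := by
      rw [sub_eq_zero] at hq0; exact hq0.symm
    have hbc : (QuotientAddGroup.mk b : G ⧸ H) = QuotientAddGroup.mk c := by
      have : (QuotientAddGroup.mk c : G ⧸ H) - QuotientAddGroup.mk b = 0 := h1Q ▸ hq0
      rw [sub_eq_zero] at this; exact this.symm
    have sab : s (QuotientAddGroup.mk a) = s (QuotientAddGroup.mk b) := by rw [hab]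
    have sbc : s (QuotientAddGroup.mk b) = s (QuotientAddGroup.mk c) := by rw [hbc]
    have h1H : (⟨b - s (QuotientAddGroup.mk b), hmem b⟩ : H) - ⟨a - s (QuotientAddGroup.mk a), hmem a⟩
        = (⟨c - s (QuotientAddGroup.mk c), hmem c⟩ : H) - ⟨b - s (QuotientAddGroup.mk b), hmem b⟩ := by
      apply Subtype.ext
      show (b - s (QuotientAddGroup.mk b)) - (a - s (QuotientAddGroup.mk a))
        = (c - s (QuotientAddGroup.mk c)) - (b - s (QuotientAddGroup.mk b))
      rw [sab, sbc, sub_sub_sub_cancel_right, sub_sub_sub_cancel_right]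
      exact h1
    have h2H : (⟨b - s (QuotientAddGroup.mk b), hmem b⟩ : H) - ⟨a - s (QuotientAddGroup.mk a), hmem a⟩ ≠ 0 := by
      intro h0
      rw [sub_eq_zero] at h0
      have hv : b - s (QuotientAddGroup.mk b) = a - s (QuotientAddGroup.mk a) :=
        congrArg Subtype.val h0
      rw [sab, sub_left_inj] at hv
      exact h2 (by rw [hv, sub_self])
    have hsab : s (πQ (QuotientAddGroup.mk b)) = s (πQ (QuotientAddGroup.mk a)) := by rw [hab]
    have hsbc : s (πQ (QuotientAddGroup.mk c)) = s (πQ (QuotientAddGroup.mk b)) := by rw [hbc]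
    have e1 : π b - π a =
        ((πH ⟨b - s (QuotientAddGroup.mk b), hmem b⟩ : H) : G)
        - ((πH ⟨a - s (QuotientAddGroup.mk a), hmem a⟩ : H) : G) := by
      rw [hπdef a, hπdef b, hsab]; abel
    have e2 : π c - π b =
        ((πH ⟨c - s (QuotientAddGroup.mk c), hmem c⟩ : H) : G)
        - ((πH ⟨b - s (QuotientAddGroup.mk b), hmem b⟩ : H) : G) := by
      rw [hπdef b, hπdef c, hsbc]; abel
    apply hπH _ _ _ h1H h2H
    apply Subtype.ext
    push_cast
    rw [← e1, ← e2]
    exact hcon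
  · exact hπQ _ _ _ h1Q hq0 hconQ
end

section
/- The set of positive integers n for which ℤ/nℤ admits an AP-destroying permutation is closed under multiplication: if ℤ/mℤ and ℤ/nℤ each admit an AP-destroying permutation, then so does ℤ/(mn)ℤ. -/
section Aux

variable (m n : ℕ) [NeZero m] [NeZero n] [NeZero (m * n)]

/-- The "digit" equivalence `ZMod (m*n) ≃ ZMod m × ZMod n`. -/
private def apdE : ZMod (m * n) ≃ ZMod m × ZMod n where
  toFun x := (((ZMod.val x) % m : ℕ), ((ZMod.val x) / m : ℕ))
  invFun p := ((p.1.val + m * p.2.val : ℕ) : ZMod (m * n))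
  left_inv x := by
    have hm : 0 < m := Nat.pos_of_ne_zero (NeZero.ne m)
    have h1 : ((((ZMod.val x) % m : ℕ) : ZMod m)).val = (ZMod.val x) % m :=
      ZMod.val_cast_of_lt (Nat.mod_lt _ hm)
    have hlt : (ZMod.val x) / m < n := by
      rw [Nat.div_lt_iff_lt_mul hm]
      exact lt_of_lt_of_le (ZMod.val_lt x) (le_of_eq (mul_comm m n))
    have h2 : ((((ZMod.val x) / m : ℕ) : ZMod n)).val = (ZMod.val x) / m :=
      ZMod.val_cast_of_lt hlt
    simp only [h1, h2, Nat.mod_add_div]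
    exact ZMod.natCast_rightInverse x
  right_inv p := by
    have hm : 0 < m := Nat.pos_of_ne_zero (NeZero.ne m)
    have ha := ZMod.val_lt p.1
    have hb := ZMod.val_lt p.2
    have hk : p.1.val + m * p.2.val < m * n := by nlinarith
    have hv : ((( p.1.val + m * p.2.val : ℕ) : ZMod (m * n))).val
        = p.1.val + m * p.2.val := ZMod.val_cast_of_lt hk
    have h1 : (p.1.val + m * p.2.val) % m = p.1.val := by
      rw [Nat.add_mul_mod_self_left]
      exact Nat.mod_eq_of_lt ha
    have h2 : (p.1.val + m * p.2.val) / m = p.2.val := by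
      rw [Nat.add_mul_div_left _ _ hm, Nat.div_eq_of_lt ha, Nat.zero_add]
    ext
    · simp only [hv, h1]
      exact ZMod.natCast_rightInverse p.1
    · simp only [hv, h2]
      exact ZMod.natCast_rightInverse p.2

/-- Embedding of `ZMod n` into `ZMod (m*n)` as multiples of `m`. -/
private def apdI : ZMod n →+ ZMod (m * n) :=
  ZMod.lift n ⟨(Int.castAddHom (ZMod (m * n))).comp (AddMonoidHom.mulLeft (m : ℤ)), by
    simp only [AddMonoidHom.comp_apply, AddMonoidHom.coe_mulLeft, Int.coe_castAddHom]
    push_cast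
    exact_mod_cast ZMod.natCast_self (m * n)⟩

private lemma apdI_apply (t : ZMod n) : apdI m n t = ((m * t.val : ℤ) : ZMod (m * n)) := by
  conv_lhs => rw [← ZMod.natCast_rightInverse t]
  have : ((t.val : ℕ) : ZMod n) = ((t.val : ℤ) : ZMod n) := by push_cast; rfl
  rw [this, apdI, ZMod.lift_coe]
  rfl

private lemma apdI_inj : Function.Injective (apdI m n) := by
  rw [injective_iff_map_eq_zero]
  intro t ht
  rw [apdI_apply] at ht
  have hdvd : ((m * n : ℕ) : ℤ) ∣ (m * t.val : ℤ) := by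
    rwa [ZMod.intCast_zmod_eq_zero_iff_dvd] at ht
  have hm : 0 < m := Nat.pos_of_ne_zero (NeZero.ne m)
  have hdvd' : (m * n : ℕ) ∣ m * t.val := by exact_mod_cast hdvd
  have hn : n ∣ t.val := (Nat.mul_dvd_mul_iff_left hm).mp hdvd'
  have hv : t.val = 0 := Nat.eq_zero_of_dvd_of_lt hn (ZMod.val_lt t)
  rwa [ZMod.val_eq_zero] at hv

private lemma apdE_symm_fst (p : ZMod m × ZMod n) :
    ZMod.castHom (dvd_mul_right m n) (ZMod m) ((apdE m n).symm p) = p.1 := by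
  show ZMod.castHom (dvd_mul_right m n) (ZMod m)
      ((p.1.val + m * p.2.val : ℕ) : ZMod (m * n)) = p.1
  rw [map_natCast]
  push_cast
  rw [ZMod.natCast_self]
  simp [ZMod.natCast_rightInverse p.1]

private lemma apdE_symm_sub (p q : ZMod m × ZMod n) (h : p.1 = q.1) :
    (apdE m n).symm q - (apdE m n).symm p = apdI m n (q.2 - p.2) := by
  rw [map_sub, apdI_apply, apdI_apply]
  show ((q.1.val + m * q.2.val : ℕ) : ZMod (m * n))
      - ((p.1.val + m * p.2.val : ℕ) : ZMod (m * n)) = _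
  rw [← h]
  push_cast
  ring

private lemma apdE_fst (x : ZMod (m * n)) :
    ((apdE m n) x).1 = ZMod.castHom (dvd_mul_right m n) (ZMod m) x := by
  show ((x.val % m : ℕ) : ZMod m) = _
  rw [ZMod.natCast_mod, ZMod.natCast_val, ZMod.castHom_apply]

end Aux

/-- If `ℤ/mℤ` and `ℤ/nℤ` (with `m, n` positive) each admit an AP-destroying
permutation, then so does `ℤ/(mn)ℤ`. -/
theorem ap_destroying_zmod_mul
    (m n : ℕ) (hm : 0 < m) (hn : 0 < n)
    (hM : ∃ π : Equiv.Perm (ZMod m),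
        ∀ a b c : ZMod m, b - a = c - b → b - a ≠ 0 → π b - π a ≠ π c - π b)
    (hN : ∃ π : Equiv.Perm (ZMod n),
        ∀ a b c : ZMod n, b - a = c - b → b - a ≠ 0 → π b - π a ≠ π c - π b) :
    ∃ π : Equiv.Perm (ZMod (m * n)),
        ∀ a b c : ZMod (m * n), b - a = c - b → b - a ≠ 0 →
          π b - π a ≠ π c - π b := by
  obtain ⟨σ, hσ⟩ := hM
  obtain ⟨τ, hτ⟩ := hN
  haveI : NeZero m := ⟨hm.ne'⟩
  haveI : NeZero n := ⟨hn.ne'⟩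
  haveI : NeZero (m * n) := ⟨(Nat.mul_pos hm hn).ne'⟩
  refine ⟨(apdE m n).trans ((σ.prodCongr τ).trans (apdE m n).symm), ?_⟩
  intro a b c hap hne heq
  have hπ : ∀ x : ZMod (m * n),
      ((apdE m n).trans ((σ.prodCongr τ).trans (apdE m n).symm)) x
        = (apdE m n).symm (σ ((apdE m n) x).1, τ ((apdE m n) x).2) := fun _ => rfl
  rw [hπ a, hπ b, hπ c] at heq
  have hfab : ZMod.castHom (dvd_mul_right m n) (ZMod m) b
      - ZMod.castHom (dvd_mul_right m n) (ZMod m) a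
      = ZMod.castHom (dvd_mul_right m n) (ZMod m) c
      - ZMod.castHom (dvd_mul_right m n) (ZMod m) b := by
    rw [← map_sub, ← map_sub, hap]
  by_cases h1 : ZMod.castHom (dvd_mul_right m n) (ZMod m) b
      - ZMod.castHom (dvd_mul_right m n) (ZMod m) a = 0
  · -- the three points agree mod m; use the second coordinate
    have hab : ((apdE m n) a).1 = ((apdE m n) b).1 := by
      rw [apdE_fst, apdE_fst]; exact (sub_eq_zero.mp h1).symm
    have hbc : ((apdE m n) b).1 = ((apdE m n) c).1 := by
      rw [apdE_fst, apdE_fst]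
      have h2 : ZMod.castHom (dvd_mul_right m n) (ZMod m) c
          - ZMod.castHom (dvd_mul_right m n) (ZMod m) b = 0 := by rw [← hfab]; exact h1
      exact (sub_eq_zero.mp h2).symm
    have key : ∀ x y : ZMod (m * n), ((apdE m n) x).1 = ((apdE m n) y).1 →
        y - x = apdI m n (((apdE m n) y).2 - ((apdE m n) x).2) := by
      intro x y h
      have h3 := apdE_symm_sub m n ((apdE m n) x) ((apdE m n) y) h
      rwa [Equiv.symm_apply_apply, Equiv.symm_apply_apply] at h3
    have hba : b - a = apdI m n (((apdE m n) b).2 - ((apdE m n) a).2) := key a b hab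
    have hcb : c - b = apdI m n (((apdE m n) c).2 - ((apdE m n) b).2) := key b c hbc
    have hd : ((apdE m n) b).2 - ((apdE m n) a).2
        = ((apdE m n) c).2 - ((apdE m n) b).2 :=
      apdI_inj m n (by rw [← hba, ← hcb]; exact hap)
    have hd0 : ((apdE m n) b).2 - ((apdE m n) a).2 ≠ 0 := by
      intro h0
      exact hne (by rw [hba, h0, map_zero])
    have e1 := apdE_symm_sub m n (σ ((apdE m n) a).1, τ ((apdE m n) a).2)
      (σ ((apdE m n) b).1, τ ((apdE m n) b).2) (congrArg σ hab)
    have e2 := apdE_symm_sub m n (σ ((apdE m n) b).1, τ ((apdE m n) b).2)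
      (σ ((apdE m n) c).1, τ ((apdE m n) c).2) (congrArg σ hbc)
    rw [heq, e2] at e1
    exact hτ ((apdE m n) a).2 ((apdE m n) b).2 ((apdE m n) c).2 hd hd0
      ((apdI_inj m n e1).symm)
  · -- the progression is nontrivial mod m; use the first coordinate
    have hfπ : ∀ x : ZMod (m * n),
        ZMod.castHom (dvd_mul_right m n) (ZMod m)
          ((apdE m n).symm (σ ((apdE m n) x).1, τ ((apdE m n) x).2))
        = σ (ZMod.castHom (dvd_mul_right m n) (ZMod m) x) := by
      intro x
      rw [apdE_symm_fst m n (σ ((apdE m n) x).1, τ ((apdE m n) x).2)]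
      rw [apdE_fst]
    have h4 := congrArg (ZMod.castHom (dvd_mul_right m n) (ZMod m)) heq
    rw [map_sub, map_sub, hfπ a, hfπ b, hfπ c] at h4
    exact hσ _ _ _ hfab h1 h4
end

section
/- If G and H are abelian groups each admitting an AP-destroying permutation, then the direct sum G ⊕ H admits an AP-destroying permutation. -/
/-- If abelian groups `G` and `H` each admit an AP-destroying permutation, then so
does their direct sum `G × H`. -/
theorem ap_destroying_prod
    (G H : Type*) [AddCommGroup G] [AddCommGroup H]
    (hG : ∃ π : Equiv.Perm G,
        ∀ a b c : G, b - a = c - b → b - a ≠ 0 → π b - π a ≠ π c - π b)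
    (hH : ∃ π : Equiv.Perm H,
        ∀ a b c : H, b - a = c - b → b - a ≠ 0 → π b - π a ≠ π c - π b) :
    ∃ π : Equiv.Perm (G × H),
        ∀ a b c : G × H, b - a = c - b → b - a ≠ 0 → π b - π a ≠ π c - π b := by
  obtain ⟨f, hf⟩ := hG
  obtain ⟨g, hg⟩ := hH
  refine ⟨f.prodCongr g, ?_⟩
  intro a b c hprog hne heq
  have h1 : b.1 - a.1 = c.1 - b.1 := congrArg Prod.fst hprog
  have h2 : b.2 - a.2 = c.2 - b.2 := congrArg Prod.snd hprog
  have he1 : f b.1 - f a.1 = f c.1 - f b.1 := congrArg Prod.fst heq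
  have he2 : g b.2 - g a.2 = g c.2 - g b.2 := congrArg Prod.snd heq
  by_cases h : b.1 - a.1 = 0
  · have h' : b.2 - a.2 ≠ 0 := by
      intro h2'
      exact hne (Prod.ext (by simpa using h) (by simpa using h2'))
    exact hg a.2 b.2 c.2 h2 h' he2
  · exact hf a.1 b.1 c.1 h1 h he1
end

section
/- Let F_q be a finite field of odd characteristic p. The permutation f of F_q defined by f(0) = 1, f(1) = 0, and f(x) = x⁻¹ for x ∉ {0,1} destroys every nonconstant 3-term arithmetic progression (a,b,c) (meaning b − a = c − b ≠ 0) except for the following: if p = 3, the triples whose underlying set is {−1,0,1}; if p > 3, the triples (0, 3/2, 3), (3, 3/2, 0), (1/3, 2/3, 1), and (1, 2/3, 1/3). That is, for any nonconstant 3-term arithmetic progression (a,b,c) not in the stated list, (f(a), f(b), f(c)) is not an arithmetic progression. -/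
/-! Off `{0, 1}` the permutation is inversion, and inversion maps no nonconstant progression
`x, y, z` of nonzero elements to a progression: if `x + z = 2 * y` then
`y * (x + z) - 2 * x * z = 2 * (x - y) ^ 2`. So some term lies in `{0, 1}`, where the permutation
is `x ↦ 1 - x`, and the remaining configurations are solved directly: a middle term in `{0, 1}`
is impossible, a single endpoint in `{0, 1}` forces the middle term `3 / 2` or `2 / 3`, and two
terms in `{0, 1}` force `3 = 0`. -/

section Arithmetic

variable {F : Type*} [Field F] {a b c : F}

theorem inv_add_inv_ne_two_mul_inv (h2 : (2 : F) ≠ 0) (ha : a ≠ 0) (hb : b ≠ 0) (hc : c ≠ 0)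
    (hAP : a + c = 2 * b) (hab : a ≠ b) : a⁻¹ + c⁻¹ ≠ 2 * b⁻¹ := by
  intro h
  field_simp at h
  have hsq : 2 * (a - b) ^ 2 = 0 := by linear_combination h - (b - 2 * a) * hAP
  simp [h2, sub_eq_zero, hab] at hsq

theorem inv_add_inv_ne_two_mul_one_sub (h2 : (2 : F) ≠ 0) (ha : a ≠ 0) (hc : c ≠ 0)
    (hb : b = 0 ∨ b = 1) (hAP : a + c = 2 * b) : a⁻¹ + c⁻¹ ≠ 2 * (1 - b) := by
  intro h
  field_simp at h
  have key : 2 * (b - (1 - b) * a * c) = 0 := by linear_combination h - hAP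
  rcases hb with rfl | rfl <;> simp_all

theorem eq_of_one_sub_add_inv_eq_two_mul_inv (h2 : (2 : F) ≠ 0) (hb : b ≠ 0) (hc : c ≠ 0)
    (ha : a = 0 ∨ a = 1) (hAP : a + c = 2 * b) (h : 1 - a + c⁻¹ = 2 * b⁻¹) :
    (3 : F) ≠ 0 ∧ (a = 0 ∧ b = 3 / 2 ∧ c = 3 ∨ a = 1 ∧ b = 2 / 3 ∧ c = 1 / 3) := by
  rcases ha with rfl | rfl
  · obtain rfl : c = 2 * b := by linear_combination hAP
    field_simp at h
    have hb3 : 2 * b = 3 := by linear_combination h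
    have h3 : (3 : F) ≠ 0 := hb3 ▸ mul_ne_zero h2 hb
    exact ⟨h3, .inl ⟨rfl, by rw [eq_div_iff h2]; linear_combination hb3, hb3⟩⟩
  · obtain rfl : c = 2 * b - 1 := by linear_combination hAP
    field_simp at h
    have hb3 : 3 * b = 2 := by linear_combination -h
    have h3 : (3 : F) ≠ 0 := fun h3 => h2 (by rw [← hb3, h3, zero_mul])
    refine ⟨h3, .inr ⟨rfl, ?_, ?_⟩⟩ <;> rw [eq_div_iff h3]
    · linear_combination hb3
    · linear_combination 2 * hb3

theorem three_eq_zero_of_one_sub_add_inv_eq (h2 : (2 : F) ≠ 0) (ha : a = 0 ∨ a = 1)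
    (hb : b = 0 ∨ b = 1) (hab : a ≠ b) (hAP : a + c = 2 * b) (h : 1 - a + c⁻¹ = 2 * (1 - b)) :
    (3 : F) = 0 ∧ ({a, b, c} : Set F) = {-1, 0, 1} := by
  rcases ha with rfl | rfl <;> rcases hb with rfl | rfl
  · exact absurd rfl hab
  · obtain rfl : c = 2 := by linear_combination hAP
    have h3 : (3 : F) = 0 := by field_simp at h; linear_combination h
    refine ⟨h3, ?_⟩
    rw [show (2 : F) = -1 by linear_combination h3]
    ext; simp only [Set.mem_insert_iff, Set.mem_singleton_iff]; tauto
  · obtain rfl : c = -1 := by linear_combination hAP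
    have h3 : (3 : F) = 0 := by
      rw [inv_neg, inv_one] at h
      linear_combination -h
    refine ⟨h3, ?_⟩
    ext; simp only [Set.mem_insert_iff, Set.mem_singleton_iff]; tauto
  · exact absurd rfl hab

theorem three_eq_zero_of_one_sub_add_one_sub_eq (ha : a = 0 ∨ a = 1)
    (hc : c = 0 ∨ c = 1) (hac : a ≠ c) (hAP : a + c = 2 * b) (h : 1 - a + (1 - c) = 2 * b⁻¹) :
    (3 : F) = 0 ∧ ({a, b, c} : Set F) = {-1, 0, 1} := by
  have hsum : a + c = 1 := by
    rcases ha with rfl | rfl <;> rcases hc with rfl | rfl <;> first | exact absurd rfl hac | ring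
  have hb : b ≠ 0 := by rintro rfl; simp_all
  have h3 : (3 : F) = 0 := by
    field_simp at h
    linear_combination -2 * h - 2 * b * hsum - hAP + hsum
  obtain rfl : b = -1 := by linear_combination b * h3 - hsum + hAP
  refine ⟨h3, ?_⟩
  rcases ha with rfl | rfl <;> rcases hc with rfl | rfl <;> first | exact absurd rfl hac |
    (ext; simp only [Set.mem_insert_iff, Set.mem_singleton_iff]; tauto)

end Arithmetic

section SwapInv

variable {F : Type*} [Field F] [DecidableEq F] {a b c x : F}

def swapInv (x : F) : F := if x = 0 then 1 else if x = 1 then 0 else x⁻¹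

theorem swapInv_of_eq_zero_or_eq_one (hx : x = 0 ∨ x = 1) : swapInv x = 1 - x := by
  rcases hx with rfl | rfl <;> simp [swapInv]

theorem swapInv_of_not_eq_zero_or_eq_one (hx : ¬(x = 0 ∨ x = 1)) : swapInv x = x⁻¹ := by
  obtain ⟨h0, h1⟩ := not_or.mp hx
  simp [swapInv, h0, h1]

theorem swapInv_ap_classification (h2 : (2 : F) ≠ 0) (hAP : a + c = 2 * b) (hab : a ≠ b)
    (h : swapInv a + swapInv c = 2 * swapInv b) :
    ((3 : F) = 0 ∧ ({a, b, c} : Set F) = {-1, 0, 1}) ∨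
    ((3 : F) ≠ 0 ∧ ((a, b, c) = ((0 : F), (3 : F) / 2, (3 : F)) ∨
        (a, b, c) = ((3 : F), (3 : F) / 2, (0 : F)) ∨
        (a, b, c) = ((1 : F) / 3, (2 : F) / 3, (1 : F)) ∨
        (a, b, c) = ((1 : F), (2 : F) / 3, (1 : F) / 3))) := by
  have hcb : c ≠ b := fun hcb => hab (by linear_combination hAP - hcb)
  have hac : a ≠ c := fun hac => hab (mul_left_cancel₀ h2 (by linear_combination hAP + hac))
  have hAP_rev : c + a = 2 * b := by linear_combination hAP
  have hset_rev : ({c, b, a} : Set F) = {a, b, c} := by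
    rw [Set.insert_comm, Set.pair_comm, Set.insert_comm]
  have ne_zero {x : F} (hx : ¬(x = 0 ∨ x = 1)) : x ≠ 0 := fun h0 => hx (.inl h0)
  simp only [Prod.mk.injEq]
  by_cases ha : a = 0 ∨ a = 1 <;> by_cases hb : b = 0 ∨ b = 1 <;> by_cases hc : c = 0 ∨ c = 1 <;>
    simp only [swapInv_of_eq_zero_or_eq_one, swapInv_of_not_eq_zero_or_eq_one, ha, hb, hc,
      not_false_eq_true] at h
  · exfalso
    rcases ha with rfl | rfl <;> rcases hb with rfl | rfl <;> rcases hc with rfl | rfl <;> simp_all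
  · exact .inl (three_eq_zero_of_one_sub_add_inv_eq h2 ha hb hab hAP h)
  · exact .inl (three_eq_zero_of_one_sub_add_one_sub_eq ha hc hac hAP h)
  · obtain ⟨h3, htriple⟩ :=
      eq_of_one_sub_add_inv_eq_two_mul_inv h2 (ne_zero hb) (ne_zero hc) ha hAP h
    exact .inr ⟨h3, by tauto⟩
  · rw [add_comm] at h
    rw [← hset_rev]
    exact .inl (three_eq_zero_of_one_sub_add_inv_eq h2 hc hb hcb hAP_rev h)
  · exact absurd h (inv_add_inv_ne_two_mul_one_sub h2 (ne_zero ha) (ne_zero hc) hb hAP)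
  · rw [add_comm] at h
    obtain ⟨h3, htriple⟩ :=
      eq_of_one_sub_add_inv_eq_two_mul_inv h2 (ne_zero hb) (ne_zero ha) hc hAP_rev h
    exact .inr ⟨h3, by tauto⟩
  · exact absurd h
      (inv_add_inv_ne_two_mul_inv h2 (ne_zero ha) (ne_zero hb) (ne_zero hc) hAP hab)

end SwapInv

theorem inversion_destroys_all_but_finitely_many_aps_general
    (F : Type*) [Field F] [DecidableEq F]
    (p : ℕ) [CharP F p] (hodd : Odd p)
    (f : F → F)
    (hf : ∀ x : F, f x = if x = 0 then 1 else if x = 1 then 0 else x⁻¹)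
    (a b c : F) (hAP : b - a = c - b) (hne : b - a ≠ 0)
    (h3 : ¬(p = 3 ∧ ({a, b, c} : Set F) = {-1, 0, 1}))
    (hp3 : ¬(3 < p ∧ ((a, b, c) = ((0 : F), (3 : F) / 2, (3 : F)) ∨
        (a, b, c) = ((3 : F), (3 : F) / 2, (0 : F)) ∨
        (a, b, c) = ((1 : F) / 3, (2 : F) / 3, (1 : F)) ∨
        (a, b, c) = ((1 : F), (2 : F) / 3, (1 : F) / 3)))) :
    f b - f a ≠ f c - f b := by
  obtain rfl : f = swapInv := funext hf
  have hp1 : p ≠ 1 := CharP.char_ne_one F p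
  have hp2 : ringChar F ≠ 2 := by
    rw [ringChar.eq F p]
    rintro rfl
    exact absurd hodd (by decide)
  have three_eq_zero_iff : (3 : F) = 0 ↔ p = 3 := by
    rw [← Nat.cast_ofNat, CharP.cast_eq_zero_iff F p, Nat.dvd_prime Nat.prime_three,
      or_iff_right hp1]
  intro heq
  have hAP' : a + c = 2 * b := by linear_combination -hAP
  have hab : a ≠ b := (sub_ne_zero.mp hne).symm
  have heq' : swapInv a + swapInv c = 2 * swapInv b := by linear_combination -heq
  rcases swapInv_ap_classification (Ring.two_ne_zero hp2) hAP' hab heq' with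
    ⟨h3F, hset⟩ | ⟨h3F, htriple⟩
  · exact h3 ⟨three_eq_zero_iff.mp h3F, hset⟩
  · have hp_ne_three : p ≠ 3 := mt three_eq_zero_iff.mpr h3F
    rw [Nat.odd_iff] at hodd
    exact hp3 ⟨by omega, htriple⟩

/-- The permutation `f` of a finite field `F` of odd characteristic `p`, given by
`f 0 = 1`, `f 1 = 0` and `f x = x⁻¹` otherwise, destroys every nonconstant 3-term
arithmetic progression except: when `p = 3`, the triples with underlying set
`{-1, 0, 1}`; and when `p > 3`, the triples `(0, 3/2, 3)`, `(3, 3/2, 0)`,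
`(1/3, 2/3, 1)` and `(1, 2/3, 1/3)`. -/
theorem inversion_destroys_all_but_finitely_many_aps
    (F : Type*) [Field F] [Fintype F] [DecidableEq F]
    (p : ℕ) [CharP F p] (hodd : Odd p)
    (f : F → F)
    (hf : ∀ x : F, f x = if x = 0 then 1 else if x = 1 then 0 else x⁻¹)
    (a b c : F) (hAP : b - a = c - b) (hne : b - a ≠ 0)
    (h3 : ¬(p = 3 ∧ ({a, b, c} : Set F) = {-1, 0, 1}))
    (hp3 : ¬(3 < p ∧ ((a, b, c) = ((0 : F), (3 : F) / 2, (3 : F)) ∨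
        (a, b, c) = ((3 : F), (3 : F) / 2, (0 : F)) ∨
        (a, b, c) = ((1 : F) / 3, (2 : F) / 3, (1 : F)) ∨
        (a, b, c) = ((1 : F), (2 : F) / 3, (1 : F) / 3)))) :
    f b - f a ≠ f c - f b :=
  inversion_destroys_all_but_finitely_many_aps_general F p hodd f hf a b c hAP hne h3 hp3
end

section
/- Let q = 3^k with k ≥ 1, let F_q be the field with q elements, and let y ∈ F_q with y ∉ {0, 1, −1}. Define the permutation f' of F_q by f'(0) = 1, f'(1) = 0, f'(−1) = y⁻¹, f'(y) = −1, and f'(x) = x⁻¹ for all other x. If y + 1 and y² + y are both nonzero non-squares in F_q, then f' is an AP-destroying permutation of F_q. -/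
/-- Let `F` be the field with `3^k` elements (`k ≥ 1`) and `y ∉ {0, 1, -1}`. If
`y + 1` and `y² + y` are both nonzero non-squares, then the permutation obtained
from `x ↦ x⁻¹` (with `0 ↦ 1`, `1 ↦ 0`) by switching the images of `-1` and `y`
is AP-destroying. -/
theorem modified_inversion_destroys_all_aps_char_three
    (F : Type*) [Field F] [Fintype F] [DecidableEq F]
    (k : ℕ) (hk : 1 ≤ k) (hcard : Fintype.card F = 3 ^ k)
    (y : F) (hy : y ∉ ({0, 1, -1} : Set F))
    (f' : F → F)
    (hf' : ∀ x : F, f' x =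
      if x = 0 then 1 else if x = 1 then 0 else if x = -1 then y⁻¹
      else if x = y then -1 else x⁻¹)
    (h1 : y + 1 ≠ 0) (h1' : ¬IsSquare (y + 1))
    (h2 : y ^ 2 + y ≠ 0) (h2' : ¬IsSquare (y ^ 2 + y)) :
    Function.Bijective f' ∧
      ∀ a b c : F, b - a = c - b → b - a ≠ 0 → f' b - f' a ≠ f' c - f' b := by
  have hy' : y ≠ 0 ∧ y ≠ 1 ∧ y ≠ -1 := by
    simpa [Set.mem_insert_iff, not_or] using hy
  obtain ⟨hy0, hy1, hym⟩ := hy'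
  have h3 : (3 : F) = 0 := by
    have hc : ((Fintype.card F : ℕ) : F) = 0 := FiniteField.cast_card_eq_zero F
    rw [hcard] at hc
    push_cast at hc
    exact pow_eq_zero_iff (by omega) |>.mp hc
  have hm0 : (-1 : F) ≠ 0 := by simp
  have hm1 : (-1 : F) ≠ 1 := by
    intro hh
    exact one_ne_zero (α := F) (by linear_combination h3 + hh)
  -- evaluation lemmas
  have hfz : f' 0 = 1 := by rw [hf']; simp
  have hfo : f' 1 = 0 := by rw [hf']; simp
  have hfm : f' (-1) = y⁻¹ := by rw [hf']; simp [hm0, hm1]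
  have hfy : f' y = -1 := by rw [hf']; simp [hy0, hy1, hym]
  have hgen : ∀ x : F, x ≠ 0 → x ≠ 1 → x ≠ -1 → x ≠ y → f' x = x⁻¹ := by
    intro x hx0 hx1 hxm hxy; rw [hf']; simp [hx0, hx1, hxm, hxy]
  -- injectivity
  have hinj : Function.Injective f' := by
    set g : F → F := fun x => if x = 1 then 0 else if x = 0 then 1
      else if x = y⁻¹ then -1 else if x = -1 then y else x⁻¹ with hg
    have hleft : ∀ x, g (f' x) = x := by
      intro x
      by_cases hx0 : x = 0
      · subst hx0; rw [hfz]; simp [hg]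
      by_cases hx1 : x = 1
      · subst hx1; rw [hfo]; simp [hg]
      by_cases hxm : x = -1
      · subst hxm; rw [hfm]
        simp [hg, inv_eq_one, inv_eq_zero, hy0, hy1]
      by_cases hxy : x = y
      · rw [hxy, hfy]
        have hmy : (-1 : F) ≠ y⁻¹ := by
          intro hh
          apply hym
          rw [← inv_inv y, ← hh]
          norm_num
        simp [hg, hm0, hm1, hmy]
      · rw [hgen x hx0 hx1 hxm hxy]
        have e1 : x⁻¹ ≠ 1 := by simpa [inv_eq_one] using hx1
        have e0 : x⁻¹ ≠ 0 := inv_ne_zero hx0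
        have ey : x⁻¹ ≠ y⁻¹ := fun hh => hxy (inv_injective hh)
        have em : x⁻¹ ≠ -1 := by
          intro hh
          apply hxm
          rw [← inv_inv x, hh]
          norm_num
        simp [hg, e1, e0, ey, em]
    exact Function.LeftInverse.injective hleft
  refine ⟨Finite.injective_iff_bijective.mp hinj, ?_⟩
  -- helper lemmas for AP destruction
  -- triple (0, q, r)
  have H0 : ∀ q r : F, q + r = 0 → q ≠ 0 → r ≠ 0 → q ≠ r →
      1 + f' q + f' r = 0 → False := by
    intro q r h hq0 hr0 hqr hs
    rcases eq_or_ne q 1 with hq1 | hq1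
    · have hr' : r = -1 := by linear_combination h - hq1
      rw [hq1, hr', hfo, hfm] at hs
      apply h1
      field_simp at hs
      linear_combination hs
    rcases eq_or_ne q (-1) with hqm | hqm
    · have hr' : r = 1 := by linear_combination h - hqm
      rw [hqm, hr', hfm, hfo] at hs
      apply h1
      field_simp at hs
      linear_combination hs
    rcases eq_or_ne q y with hqy | hqy
    · have hr' : r = -y := by linear_combination h - hqy
      have e0 : -y ≠ 0 := neg_ne_zero.mpr hy0
      have e1 : -y ≠ 1 := fun hh => hym (by linear_combination -hh)
      have em : -y ≠ -1 := fun hh => hy1 (by linear_combination -hh)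
      have ey : -y ≠ y := fun hh => hy0 (by linear_combination y * h3 + hh)
      rw [hqy, hr', hfy, hgen (-y) e0 e1 em ey] at hs
      have : (-y)⁻¹ = 0 := by linear_combination hs
      exact inv_ne_zero e0 this
    rcases eq_or_ne r y with hry | hry
    · have hq' : q = -y := by linear_combination h - hry
      have e0 : -y ≠ 0 := neg_ne_zero.mpr hy0
      have e1 : -y ≠ 1 := fun hh => hym (by linear_combination -hh)
      have em : -y ≠ -1 := fun hh => hy1 (by linear_combination -hh)
      have ey : -y ≠ y := fun hh => hy0 (by linear_combination y * h3 + hh)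
      rw [hry, hq', hfy, hgen (-y) e0 e1 em ey] at hs
      have : (-y)⁻¹ = 0 := by linear_combination hs
      exact inv_ne_zero e0 this
    · have hr1 : r ≠ 1 := fun hh => hqm (by linear_combination h - hh)
      have hrm : r ≠ -1 := fun hh => hq1 (by linear_combination h - hh)
      rw [hgen q hq0 hq1 hqm hqy, hgen r hr0 hr1 hrm hry] at hs
      field_simp at hs
      have hqr0 : q * r = 0 := by linear_combination hs - h
      exact mul_ne_zero hq0 hr0 hqr0
  -- triple (1, q, r) with no zero
  have H1 : ∀ q r : F, 1 + q + r = 0 → q ≠ 0 → q ≠ 1 → r ≠ 0 → r ≠ 1 →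
      q ≠ r → f' q + f' r = 0 → False := by
    intro q r h hq0 hq1 hr0 hr1 hqr hs
    rcases eq_or_ne q (-1) with hqm | hqm
    · exact hr0 (by linear_combination h - hqm)
    rcases eq_or_ne r (-1) with hrm | hrm
    · exact hq0 (by linear_combination h - hrm)
    rcases eq_or_ne q y with hqy | hqy
    · have hr' : r = -1 - y := by linear_combination h - hqy
      have erm : r ≠ -1 := fun hh => hy0 (by linear_combination hr' - hh)
      have ery : r ≠ y := by
        intro hh
        apply hy1
        linear_combination hh - hr' + y * h3
      rw [hqy, hfy, hgen r hr0 hr1 erm ery] at hs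
      have : r⁻¹ = 1 := by linear_combination hs
      exact hr1 (inv_eq_one.mp this)
    rcases eq_or_ne r y with hry | hry
    · have hq' : q = -1 - y := by linear_combination h - hry
      have eqm : q ≠ -1 := fun hh => hy0 (by linear_combination hq' - hh)
      have eqy : q ≠ y := by
        intro hh
        apply hy1
        linear_combination hh - hq' + y * h3
      rw [hry, hfy, hgen q hq0 hq1 eqm eqy] at hs
      have : q⁻¹ = 1 := by linear_combination hs
      exact hq1 (inv_eq_one.mp this)
    · rw [hgen q hq0 hq1 hqm hqy, hgen r hr0 hr1 hrm hry] at hs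
      field_simp at hs
      exact one_ne_zero (α := F) (by linear_combination h - hs)
  -- triple (-1, q, r) with q, r ∉ {0,1,-1}
  have HM : ∀ q r : F, -1 + q + r = 0 → q ≠ 0 → q ≠ 1 → q ≠ -1 →
      r ≠ 0 → r ≠ 1 → r ≠ -1 → q ≠ r → y⁻¹ + f' q + f' r = 0 → False := by
    intro q r h hq0 hq1 hqm hr0 hr1 hrm hqr hs
    rcases eq_or_ne q y with hqy | hqy
    · have hr' : r = 1 - y := by linear_combination h - hqy
      have ery : r ≠ y := by
        intro hh
        apply hym
        linear_combination hh - hr' + y * h3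
      rw [hqy, hfy, hgen r hr0 hr1 hrm ery] at hs
      subst hr'
      apply h1
      have hy1' : (1 : F) - y ≠ 0 := sub_ne_zero.mpr (Ne.symm hy1)
      field_simp at hs
      have hsq : (y + 1) ^ 2 = 0 := by linear_combination hs + y * h3
      exact pow_eq_zero_iff (two_ne_zero) |>.mp hsq
    rcases eq_or_ne r y with hry | hry
    · have hq' : q = 1 - y := by linear_combination h - hry
      have eqy : q ≠ y := by
        intro hh
        apply hym
        linear_combination hh - hq' + y * h3
      rw [hry, hfy, hgen q hq0 hq1 hqm eqy] at hs
      subst hq'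
      apply h1
      have hy1' : (1 : F) - y ≠ 0 := sub_ne_zero.mpr (Ne.symm hy1)
      field_simp at hs
      have hsq : (y + 1) ^ 2 = 0 := by linear_combination hs + y * h3
      exact pow_eq_zero_iff (two_ne_zero) |>.mp hsq
    · rw [hgen q hq0 hq1 hqm hqy, hgen r hr0 hr1 hrm hry] at hs
      have hr' : r = 1 - q := by linear_combination h
      subst hr'
      have hq1' : (1 : F) - q ≠ 0 := sub_ne_zero.mpr (Ne.symm hq1)
      field_simp at hs
      exact h1' ⟨q - (1 - q), by linear_combination hs + (q - q ^ 2) * h3⟩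
  -- triple (y, q, r) with q, r ∉ {0,1,-1,y}
  have HY : ∀ q r : F, y + q + r = 0 → q ≠ 0 → q ≠ 1 → q ≠ -1 → q ≠ y →
      r ≠ 0 → r ≠ 1 → r ≠ -1 → r ≠ y → q ≠ r →
      -1 + f' q + f' r = 0 → False := by
    intro q r h hq0 hq1 hqm hqy hr0 hr1 hrm hry hqr hs
    rw [hgen q hq0 hq1 hqm hqy, hgen r hr0 hr1 hrm hry] at hs
    have hr' : r = -y - q := by linear_combination h
    subst hr'
    have hd : -y - q ≠ 0 := hr0
    field_simp at hs
    exact h2' ⟨q - (-y - q), by linear_combination -4 * hs - y * h3⟩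
  -- all generic
  have HG : ∀ p q r : F, p + q + r = 0 →
      p ≠ 0 → p ≠ 1 → p ≠ -1 → p ≠ y →
      q ≠ 0 → q ≠ 1 → q ≠ -1 → q ≠ y →
      r ≠ 0 → r ≠ 1 → r ≠ -1 → r ≠ y →
      p ≠ q → f' p + f' q + f' r = 0 → False := by
    intro p q r h hp0 hp1 hpm hpy hq0 hq1 hqm hqy hr0 hr1 hrm hry hpq hs
    rw [hgen p hp0 hp1 hpm hpy, hgen q hq0 hq1 hqm hqy,
      hgen r hr0 hr1 hrm hry] at hs
    have hr' : r = -p - q := by linear_combination h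
    subst hr'
    field_simp at hs
    have hsq : (p - q) ^ 2 = 0 := by linear_combination -hs - p * q * h3
    exact hpq (sub_eq_zero.mp (pow_eq_zero_iff two_ne_zero |>.mp hsq))
  -- main symmetric lemma
  have main : ∀ p q r : F, p + q + r = 0 → p ≠ q → p ≠ r → q ≠ r →
      f' p + f' q + f' r = 0 → False := by
    intro p q r h hpq hpr hqr hs
    rcases eq_or_ne p 0 with hp0 | hp0
    · refine H0 q r (by linear_combination h - hp0) ?_ ?_ hqr ?_
      · exact fun hh => hpq (hp0.trans hh.symm)
      · exact fun hh => hpr (hp0.trans hh.symm)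
      · rw [hp0, hfz] at hs; linear_combination hs
    rcases eq_or_ne q 0 with hq0 | hq0
    · refine H0 p r (by linear_combination h - hq0) hp0 ?_ hpr ?_
      · exact fun hh => hqr (hq0.trans hh.symm)
      · rw [hq0, hfz] at hs; linear_combination hs
    rcases eq_or_ne r 0 with hr0 | hr0
    · refine H0 p q (by linear_combination h - hr0) hp0 hq0 hpq ?_
      rw [hr0, hfz] at hs; linear_combination hs
    rcases eq_or_ne p 1 with hp1 | hp1
    · refine H1 q r (by linear_combination h - hp1) hq0 ?_ hr0 ?_ hqr ?_
      · exact fun hh => hpq (hp1.trans hh.symm)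
      · exact fun hh => hpr (hp1.trans hh.symm)
      · rw [hp1, hfo] at hs; linear_combination hs
    rcases eq_or_ne q 1 with hq1 | hq1
    · refine H1 p r (by linear_combination h - hq1) hp0 hp1 hr0 ?_ hpr ?_
      · exact fun hh => hqr (hq1.trans hh.symm)
      · rw [hq1, hfo] at hs; linear_combination hs
    rcases eq_or_ne r 1 with hr1 | hr1
    · refine H1 p q (by linear_combination h - hr1) hp0 hp1 hq0 hq1 hpq ?_
      rw [hr1, hfo] at hs; linear_combination hs
    rcases eq_or_ne p (-1) with hpm | hpm
    · refine HM q r (by linear_combination h - hpm) hq0 hq1 ?_ hr0 hr1 ?_ hqr ?_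
      · exact fun hh => hpq (hpm.trans hh.symm)
      · exact fun hh => hpr (hpm.trans hh.symm)
      · rw [hpm, hfm] at hs; linear_combination hs
    rcases eq_or_ne q (-1) with hqm | hqm
    · refine HM p r (by linear_combination h - hqm) hp0 hp1 hpm hr0 hr1 ?_ hpr ?_
      · exact fun hh => hqr (hqm.trans hh.symm)
      · rw [hqm, hfm] at hs; linear_combination hs
    rcases eq_or_ne r (-1) with hrm | hrm
    · refine HM p q (by linear_combination h - hrm) hp0 hp1 hpm hq0 hq1 hqm hpq ?_
      rw [hrm, hfm] at hs; linear_combination hs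
    rcases eq_or_ne p y with hpy | hpy
    · refine HY q r (by linear_combination h - hpy) hq0 hq1 hqm ?_ hr0 hr1 hrm ?_ hqr ?_
      · exact fun hh => hpq (hpy.trans hh.symm)
      · exact fun hh => hpr (hpy.trans hh.symm)
      · rw [hpy, hfy] at hs; linear_combination hs
    rcases eq_or_ne q y with hqy | hqy
    · refine HY p r (by linear_combination h - hqy) hp0 hp1 hpm hpy hr0 hr1 hrm ?_ hpr ?_
      · exact fun hh => hqr (hqy.trans hh.symm)
      · rw [hqy, hfy] at hs; linear_combination hs
    rcases eq_or_ne r y with hry | hry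
    · refine HY p q (by linear_combination h - hry) hp0 hp1 hpm hpy hq0 hq1 hqm hqy hpq ?_
      rw [hry, hfy] at hs; linear_combination hs
    · exact HG p q r h hp0 hp1 hpm hpy hq0 hq1 hqm hqy hr0 hr1 hrm hry hpq hs
  -- conclude
  intro a b c hprog hne hcon
  have hab : a ≠ b := fun hh => hne (by rw [hh]; ring)
  have habc : a + b + c = 0 := by linear_combination -hprog + b * h3
  have hac : a ≠ c := by
    intro hh
    exact hab (by linear_combination -habc - hh + a * h3)
  have hbc : b ≠ c := by
    intro hh
    exact hab (by linear_combination habc - 2 * hh - c * h3)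
  have hsum : f' a + f' b + f' c = 0 := by
    linear_combination -hcon + (f' b) * h3
  exact main a b c habc hab hac hbc hsum
end

section
/- Let q = 3^k with k ≥ 2 and let F_q be the field with q elements. Then there exists y ∈ F_q with y ∉ {0, 1, −1} such that y + 1 and y² + y are both nonzero non-squares in F_q. -/
/-!
A nonzero square `s ≠ 1` with `s + 1` a non-square gives `y = s`, as `y ^ 2 + y = s * (s + 1)`.
If `-1` is a square, write a non-square as `a ^ 2 + b ^ 2`; then `s = (b / a) ^ 2` works, and
`s ≠ 1` because `1 + 1 = -1` in characteristic `3`. If `-1` is not a square and there were no such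
`s`, the nonzero squares other than `1` would be closed under `x ↦ x + 1`. A finite set closed under
this shift has sum `0` (compare `∑ (x + 1) ^ 2` with `∑ x ^ 2`), whereas the nonzero squares sum
to `0` on their own, being stable under multiplication by a square `≠ 1`.
-/

open Finset Polynomial

theorem Finset.sum_comp_eq_of_mapsTo {α M : Type*} [AddCommMonoid M] {s : Finset α}
    (e : α ↪ α) (hs : Set.MapsTo e s s) (f : α → M) : ∑ x ∈ s, f (e x) = ∑ x ∈ s, f x := by
  rw [← sum_map s e f, map_eq_of_subset (by simpa [subset_iff] using fun x hx => hs hx)]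

theorem Finset.sum_eq_zero_of_forall_add_one_mem {R : Type*} [CommRing R] [NoZeroDivisors R]
    (h2 : (2 : R) ≠ 0) {s : Finset R} (hs : ∀ x ∈ s, x + 1 ∈ s) : ∑ x ∈ s, x = 0 := by
  have hshift (f : R → R) : ∑ x ∈ s, f (x + 1) = ∑ x ∈ s, f x :=
    sum_comp_eq_of_mapsTo (Equiv.addRight 1).toEmbedding hs f
  have hcard : (#s : R) = 0 := by
    simpa [sum_add_distrib] using hshift id
  have hsq : 2 * ∑ x ∈ s, x = 0 := by
    have := hshift (· ^ 2)
    simp only [add_sq, one_pow, mul_one, sum_add_distrib, sum_const, nsmul_one, hcard] at this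
    rw [mul_sum]; simpa [mul_comm] using this
  exact (mul_eq_zero.mp hsq).resolve_left h2

theorem Finset.sum_eq_zero_of_forall_mul_mem {R : Type*} [CommRing R] [IsDomain R] {c : R}
    (hc0 : c ≠ 0) (hc1 : c ≠ 1) {s : Finset R} (hs : ∀ x ∈ s, c * x ∈ s) : ∑ x ∈ s, x = 0 := by
  have h : c * ∑ x ∈ s, x = ∑ x ∈ s, x := by
    rw [mul_sum]
    exact sum_comp_eq_of_mapsTo ⟨(c * ·), mul_right_injective₀ hc0⟩ hs id
  have : (c - 1) * ∑ x ∈ s, x = 0 := by rw [sub_mul, h, one_mul, sub_self]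
  exact (mul_eq_zero.mp this).resolve_left (sub_ne_zero.mpr hc1)

theorem not_isSquare_mul_of_isSquare {K : Type*} [Field K] {a b : K} (ha : IsSquare a)
    (ha0 : a ≠ 0) (hb : ¬IsSquare b) : ¬IsSquare (a * b) :=
  fun h => hb (by simpa [ha0] using h.div ha)

namespace FiniteField

variable {F : Type*} [Field F] [Fintype F]

theorem exists_sq_add_sq_eq (hF : ringChar F ≠ 2) (x : F) : ∃ a b : F, a ^ 2 + b ^ 2 = x := by
  obtain ⟨a, b, hab⟩ := exists_root_sum_quadratic (f := X ^ 2) (g := X ^ 2 - C x)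
    (degree_X_pow 2) (degree_X_pow_sub_C two_pos x) (odd_card_of_char_ne_two hF)
  refine ⟨a, b, ?_⟩
  simp only [eval_pow, eval_X, eval_sub, eval_C] at hab
  linear_combination hab

theorem exists_isSquare_not_isSquare_add_one (hF : ringChar F ≠ 2) :
    ∃ s : F, IsSquare s ∧ ¬IsSquare (s + 1) := by
  obtain ⟨c, hc⟩ := exists_nonsquare hF
  obtain ⟨a, b, rfl⟩ := exists_sq_add_sq_eq hF c
  have ha : a ≠ 0 := by
    rintro rfl
    exact hc ⟨b, by ring⟩
  refine ⟨(b / a) ^ 2, ⟨b / a, sq _⟩, fun h => hc ?_⟩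
  have : a ^ 2 + b ^ 2 = a ^ 2 * ((b / a) ^ 2 + 1) := by field_simp; ring
  rw [this]
  exact (IsSquare.sq a).mul h

open Classical in
theorem sum_nonzero_squares_eq_zero (hF : 3 < Fintype.card F) :
    ∑ x ∈ univ.filter (fun x : F => x ≠ 0 ∧ IsSquare x), x = 0 := by
  obtain ⟨a, ha⟩ : ∃ a : F, a ∉ ({0, 1, -1} : Finset F) := by
    by_contra! h
    have := card_le_card (fun x _ => h x : univ ⊆ ({0, 1, -1} : Finset F))
    have := card_le_three (a := (0 : F)) (b := 1) (c := -1)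
    rw [card_univ] at *; omega
  simp only [mem_insert, mem_singleton, not_or] at ha
  obtain ⟨ha0, ha1, ham1⟩ := ha
  have hsq0 : a ^ 2 ≠ 0 := pow_ne_zero 2 ha0
  refine sum_eq_zero_of_forall_mul_mem hsq0 (fun h => ?_) (fun x hx => ?_)
  · exact (sq_eq_one_iff.mp h).elim ha1 ham1
  · simp only [mem_filter, mem_univ, true_and] at hx ⊢
    exact ⟨mul_ne_zero hsq0 hx.1, (IsSquare.sq a).mul hx.2⟩

open Classical in
theorem exists_isSquare_ne_one_not_isSquare_add_one_of_not_isSquare_neg_one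
    (hF : 3 < Fintype.card F) (hneg : ¬IsSquare (-1 : F)) :
    ∃ s : F, IsSquare s ∧ s ≠ 0 ∧ s ≠ 1 ∧ ¬IsSquare (s + 1) := by
  by_contra! H
  have h2 : (2 : F) ≠ 0 := fun h => hneg ⟨1, by linear_combination -h⟩
  set Q := univ.filter (fun x : F => x ≠ 0 ∧ IsSquare x)
  have h1Q : (1 : F) ∈ Q := by simp [Q]
  have hclosed : ∀ x ∈ Q.erase 1, x + 1 ∈ Q.erase 1 := by
    intro x hx
    simp only [Q, mem_erase, mem_filter, mem_univ, true_and] at hx ⊢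
    obtain ⟨hx1, hx0, hxsq⟩ := hx
    refine ⟨fun h => hx0 (by linear_combination h), fun h => ?_, H x hxsq hx0 hx1⟩
    exact hneg (by rwa [show x = -1 by linear_combination h] at hxsq)
  have := add_sum_erase Q (fun x => x) h1Q
  rw [sum_eq_zero_of_forall_add_one_mem h2 hclosed, sum_nonzero_squares_eq_zero hF] at this
  simp at this

end FiniteField

/-- In the field with `3^k` elements, `k ≥ 2`, there is an element `y ∉ {0,1,-1}`
such that `y + 1` and `y² + y` are both nonzero non-squares. -/
theorem exists_good_y_char_three
    (F : Type*) [Field F] [Fintype F]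
    (k : ℕ) (hk : 2 ≤ k) (hcard : Fintype.card F = 3 ^ k) :
    ∃ y : F, y ∉ ({0, 1, -1} : Set F) ∧
      y + 1 ≠ 0 ∧ ¬IsSquare (y + 1) ∧
      y ^ 2 + y ≠ 0 ∧ ¬IsSquare (y ^ 2 + y) := by
  have : Fact (Nat.Prime 3) := ⟨Nat.prime_three⟩
  have := charP_of_card_eq_prime_pow hcard
  have h3 : (3 : F) = 0 := CharP.cast_eq_zero F 3
  have hF : 3 < Fintype.card F :=
    hcard ▸ (by norm_num : 3 < 3 ^ 2).trans_le (Nat.pow_le_pow_right three_pos hk)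
  obtain ⟨s, hs, hs0, hs1, hsucc⟩ : ∃ s : F, IsSquare s ∧ s ≠ 0 ∧ s ≠ 1 ∧ ¬IsSquare (s + 1) := by
    by_cases hneg : IsSquare (-1 : F)
    · obtain ⟨s, hs, hsucc⟩ := FiniteField.exists_isSquare_not_isSquare_add_one
        (by rw [ringChar.eq F 3]; norm_num : ringChar F ≠ 2)
      refine ⟨s, hs, ?_, ?_, hsucc⟩ <;> rintro rfl
      · exact hsucc (by simp)
      · exact hsucc (by rwa [show (1 : F) + 1 = -1 by linear_combination h3])
    · exact FiniteField.exists_isSquare_ne_one_not_isSquare_add_one_of_not_isSquare_neg_one hF hneg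
  have hs10 : s + 1 ≠ 0 := fun h => hsucc (h ▸ IsSquare.zero)
  refine ⟨s, ?_, hs10, hsucc, ?_, ?_⟩
  · simp only [Set.mem_insert_iff, Set.mem_singleton_iff, not_or]
    exact ⟨hs0, hs1, fun h => hs10 (by rw [h]; ring)⟩
  · rw [sq, ← mul_add_one]; exact mul_ne_zero hs0 hs10
  · rw [sq, ← mul_add_one]; exact not_isSquare_mul_of_isSquare hs hs0 hsucc
end

section
/- Identify F_9 with F_3[α]/(α² + 2α + 2) and set y = α + 1. The permutation f' of F_9 defined by f'(0) = 1, f'(1) = 0, f'(−1) = y⁻¹, f'(y) = −1, and f'(x) = x⁻¹ for all other x is an AP-destroying permutation of F_9. -/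
open Polynomial

/-- The polynomial `α² + 2α + 2` over `F_3`, so that `F_9 = F_3[α]/(α² + 2α + 2)`. -/
noncomputable def f9Poly : Polynomial (ZMod 3) := X ^ 2 + 2 * X + 2

/-!
Over `F_3` the relation `α² + 2α + 2 = 0` reads `α² = 1 + α`, so `α ↦ ω` identifies
`F_3[α]/(α² + 2α + 2)` with `QuadraticAlgebra (ZMod 3) 1 1`, a field whose elements are pairs
with computable arithmetic and decidable equality. Since `f'` is built from field operations
only, it corresponds under this isomorphism to the same formula with `y = ω + 1`, for which
bijectivity and the absence of preserved 3-term progressions are finite checks over the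
9 elements. Both properties pull back along an additive bijection.
-/

open scoped QuadraticAlgebra

def DestroysThreeAPs {G : Type*} [AddGroup G] (f : G → G) : Prop :=
  ∀ a b c : G, b - a = c - b → b - a ≠ 0 → f b - f a ≠ f c - f b

instance {G : Type*} [AddGroup G] [Fintype G] [DecidableEq G] (f : G → G) :
    Decidable (DestroysThreeAPs f) := by
  unfold DestroysThreeAPs; infer_instance

theorem DestroysThreeAPs.of_semiconj {G H F : Type*} [AddGroup G] [AddGroup H] [FunLike F G H]
    [AddMonoidHomClass F G H] {e : F} (he : Function.Injective e) {f : G → G} {g : H → H}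
    (h : Function.Semiconj e f g) (hg : DestroysThreeAPs g) : DestroysThreeAPs f := by
  intro a b c hab hba hf
  refine hg (e a) (e b) (e c) ?_ ?_ ?_
  · rw [← map_sub, ← map_sub, hab]
  · rwa [← map_sub, map_ne_zero_iff e he]
  · rw [← h.eq, ← h.eq, ← h.eq, ← map_sub, ← map_sub, hf]

theorem Function.Semiconj.bijective_of_bijective {α β F : Type*} [EquivLike F α β] {e : F}
    {f : α → α} {g : β → β} (h : Function.Semiconj e f g) (hg : Function.Bijective g) :
    Function.Bijective f :=
  (EquivLike.comp_bijective f e).1 (h.comp_eq ▸ (EquivLike.bijective_comp e g).2 hg)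

def modifiedInv {K : Type*} [DivisionRing K] [DecidableEq K] (y x : K) : K :=
  if x = 0 then 1 else if x = 1 then 0 else if x = -1 then y⁻¹
  else if x = y then -1 else x⁻¹

theorem semiconj_modifiedInv {K L F : Type*} [DivisionRing K] [DivisionRing L] [DecidableEq K]
    [DecidableEq L] [FunLike F K L] [RingHomClass F K L] (e : F) (y : K) :
    Function.Semiconj e (modifiedInv y) (modifiedInv (e y)) := by
  intro x
  have he : Function.Injective e := (e : K →+* L).injective
  have h1 : e x = 1 ↔ x = 1 := map_eq_one_iff e he
  have hm1 : e x = -1 ↔ x = -1 := by rw [← map_one e, ← map_neg, he.eq_iff]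
  simp only [modifiedInv, map_eq_zero_iff e he, h1, hm1, he.eq_iff]
  split_ifs <;> simp

instance {R : Type*} [Fintype R] {a b : R} : Fintype (QuadraticAlgebra R a b) :=
  Fintype.ofEquiv (R × R) (QuadraticAlgebra.equivProd a b).symm

/-- `X² = 1 + X` has no root in `F_3`, which makes `QuadraticAlgebra (ZMod 3) 1 1` a field. -/
instance : Fact (∀ r : ZMod 3, r ^ 2 ≠ 1 + 1 * r) := ⟨by decide⟩

theorem bijective_modifiedInv_omega_add_one :
    Function.Bijective (modifiedInv (ω + 1 : QuadraticAlgebra (ZMod 3) 1 1)) := by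
  decide +kernel

theorem destroysThreeAPs_modifiedInv_omega_add_one :
    DestroysThreeAPs (modifiedInv (ω + 1 : QuadraticAlgebra (ZMod 3) 1 1)) := by
  decide +kernel

namespace F9

theorem eval₂_omega :
    f9Poly.eval₂ (algebraMap (ZMod 3) (QuadraticAlgebra (ZMod 3) 1 1)) ω = 0 := by
  simp only [f9Poly, eval₂_add, eval₂_mul, eval₂_X_pow, eval₂_X, eval₂_ofNat]
  decide +kernel

theorem root_mul_root :
    AdjoinRoot.root f9Poly * AdjoinRoot.root f9Poly =
      (1 : ZMod 3) • 1 + (1 : ZMod 3) • AdjoinRoot.root f9Poly := by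
  have hroot : AdjoinRoot.mk f9Poly (X ^ 2 + 2 * X + 2) = 0 := AdjoinRoot.mk_self
  have h3 : (3 : AdjoinRoot f9Poly) = 0 := by
    have h := map_natCast (algebraMap (ZMod 3) (AdjoinRoot f9Poly)) 3
    rw [ZMod.natCast_self, map_zero] at h
    exact_mod_cast h.symm
  simp only [map_add, map_mul, map_pow, AdjoinRoot.mk_X, map_ofNat] at hroot
  rw [one_smul, one_smul]
  linear_combination hroot - (AdjoinRoot.root f9Poly + 1) * h3

noncomputable def toQuadraticAlgebra :
    AdjoinRoot f9Poly →ₐ[ZMod 3] QuadraticAlgebra (ZMod 3) 1 1 :=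
  AdjoinRoot.liftAlgHom f9Poly (Algebra.ofId _ _) ω eval₂_omega

theorem toQuadraticAlgebra_root : toQuadraticAlgebra (AdjoinRoot.root f9Poly) = ω :=
  AdjoinRoot.liftAlgHom_root _ _ _ _

noncomputable def equivQuadraticAlgebra :
    AdjoinRoot f9Poly ≃ₐ[ZMod 3] QuadraticAlgebra (ZMod 3) 1 1 :=
  AlgEquiv.ofAlgHom toQuadraticAlgebra
    (QuadraticAlgebra.lift ⟨AdjoinRoot.root f9Poly, root_mul_root⟩)
    (QuadraticAlgebra.algHom_ext (by simp [toQuadraticAlgebra_root]))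
    (AdjoinRoot.algHom_ext (by simp [toQuadraticAlgebra_root]))

theorem equivQuadraticAlgebra_root : equivQuadraticAlgebra (AdjoinRoot.root f9Poly) = ω :=
  toQuadraticAlgebra_root

end F9

/-- In `F_9 = F_3[α]/(α² + 2α + 2)` with `y = α + 1`, the permutation `f'` given by
`f' 0 = 1`, `f' 1 = 0`, `f' (-1) = y⁻¹`, `f' y = -1` and `f' x = x⁻¹` otherwise
is an AP-destroying permutation of `F_9`. -/
theorem ap_destroying_perm_of_F9
    [Fact (Irreducible f9Poly)] [DecidableEq (AdjoinRoot f9Poly)]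
    (y : AdjoinRoot f9Poly) (hy : y = AdjoinRoot.root f9Poly + 1)
    (f' : AdjoinRoot f9Poly → AdjoinRoot f9Poly)
    (hf' : ∀ x, f' x =
      if x = 0 then 1 else if x = 1 then 0 else if x = -1 then y⁻¹
      else if x = y then -1 else x⁻¹) :
    Function.Bijective f' ∧
      ∀ a b c : AdjoinRoot f9Poly, b - a = c - b → b - a ≠ 0 →
        f' b - f' a ≠ f' c - f' b := by
  let e := F9.equivQuadraticAlgebra
  have hey : e y = ω + 1 := by simp [e, hy, F9.equivQuadraticAlgebra_root]
  have hconj : Function.Semiconj e f' (modifiedInv (ω + 1)) :=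
    funext hf' ▸ hey ▸ semiconj_modifiedInv e y
  exact ⟨hconj.bijective_of_bijective bijective_modifiedInv_omega_add_one,
    DestroysThreeAPs.of_semiconj e.injective hconj destroysThreeAPs_modifiedInv_omega_add_one⟩
end
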